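/- For all x > 0 and x' > 0, the integral over t from -1 to 1 of (1+t^2)/sqrt(x^2 + x'^2 - 2 x x' t) dt equals 4(10 max{x,x'}^2 + min{x,x'}^2)/(15 max{x,x'}^3). -/

import Mathlib

/-!
With `a = M² + m²` and `b = 2Mm` (`M = max x x'`, `m = min x x'`), the substitution
`s = √(a - b t)` makes `(1 + t²) dt / √(a - b t)` a polynomial in `s` times `ds`, which gives an
explicit antiderivative, continuous on all of `[-1, 1]`. Since the integrand is nonnegative, the
fundamental theorem of calculus applies even when `M = m` and the integrand blows up at `t = 1`.
At the endpoints `√(a ∓ b) = M ∓ m`.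
-/

open Real Set intervalIntegral

theorem intervalIntegral.integral_eq_sub_of_hasDerivAt_of_nonneg {f f' : ℝ → ℝ} {a b : ℝ}
    (hab : a ≤ b) (hcont : ContinuousOn f (Icc a b))
    (hderiv : ∀ x ∈ Ioo a b, HasDerivAt f (f' x) x) (hpos : ∀ x ∈ Ioo a b, 0 ≤ f' x) :
    ∫ y in a..b, f' y = f b - f a :=
  integral_eq_sub_of_hasDerivAt_of_le hab hcont hderiv <|
    (intervalIntegrable_iff_integrableOn_Ioc_of_le hab).2
      (integrableOn_deriv_of_nonneg hcont hderiv hpos)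

theorem hasDerivAt_antideriv_one_add_sq_div_sqrt {a b t : ℝ} (hb : b ≠ 0) (ht : 0 < a - b * t) :
    HasDerivAt (fun t => -(2 / b ^ 3) * ((b ^ 2 + a ^ 2) * √(a - b * t)
        - 2 * a / 3 * √(a - b * t) ^ 3 + √(a - b * t) ^ 5 / 5))
      ((1 + t ^ 2) / √(a - b * t)) t := by
  have hs : HasDerivAt (fun t => √(a - b * t)) (-b / (2 * √(a - b * t))) t := by
    simpa using (((hasDerivAt_id t).const_mul b).const_sub a).sqrt ht.ne'
  refine ((((hs.const_mul (b ^ 2 + a ^ 2)).sub ((hs.fun_pow 3).const_mul (2 * a / 3))).add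
    ((hs.fun_pow 5).div_const 5)).const_mul (-(2 / b ^ 3))).congr_deriv ?_
  have hs0 : √(a - b * t) ≠ 0 := (sqrt_pos.2 ht).ne'
  -- with `s² = a - b t`: `(b² + a²) - 2a s² + s⁴ = b² + (a - s²)² = b² (1 + t²)`
  calc _ = -(2 / b ^ 3) * (-b / (2 * √(a - b * t)))
          * ((b ^ 2 + a ^ 2) - 2 * a * √(a - b * t) ^ 2 + (√(a - b * t) ^ 2) ^ 2) := by
        push_cast; ring
    _ = _ := by
        rw [sq_sqrt ht.le]
        field_simp
        ring

theorem integral_one_add_sq_div_sqrt_of_le {M m : ℝ} (hm : 0 < m) (hmM : m ≤ M) :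
    ∫ t in (-1:ℝ)..1, (1 + t ^ 2) / √(M ^ 2 + m ^ 2 - 2 * M * m * t)
      = 4 * (10 * M ^ 2 + m ^ 2) / (15 * M ^ 3) := by
  have hM : 0 < M := hm.trans_le hmM
  have hb : 0 < 2 * M * m := by positivity
  have hpos : ∀ t < 1, 0 < M ^ 2 + m ^ 2 - 2 * M * m * t := fun t ht => by nlinarith
  rw [integral_eq_sub_of_hasDerivAt_of_nonneg (by norm_num) (by fun_prop)
    (fun t ht => hasDerivAt_antideriv_one_add_sq_div_sqrt hb.ne' (hpos t ht.2))
    (fun t _ => by positivity)]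
  have h1 : √(M ^ 2 + m ^ 2 - 2 * M * m * 1) = M - m := by
    rw [← sqrt_sq (sub_nonneg.2 hmM)]; ring_nf
  have h2 : √(M ^ 2 + m ^ 2 - 2 * M * m * (-1)) = M + m := by
    rw [← sqrt_sq (add_pos hM hm).le]; ring_nf
  rw [h1, h2]
  field_simp
  ring

theorem stmt0 (x x' : ℝ) (hx : 0 < x) (hx' : 0 < x') :
    (∫ t in (-1:ℝ)..1, (1 + t^2) / Real.sqrt (x^2 + x'^2 - 2*x*x'*t))
      = 4 * (10 * (max x x')^2 + (min x x')^2) / (15 * (max x x')^3) := by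
  have hsymm : ∀ t : ℝ, x ^ 2 + x' ^ 2 - 2 * x * x' * t
      = max x x' ^ 2 + min x x' ^ 2 - 2 * max x x' * min x x' * t := fun t => by
    rcases le_total x x' with h | h
    · rw [max_eq_right h, min_eq_left h]; ring
    · rw [max_eq_left h, min_eq_right h]
  simp only [hsymm]
  exact integral_one_add_sq_div_sqrt_of_le (lt_min hx hx') min_le_max
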